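/- Let d_B be a special type B partition with block decomposition [T_1, ..., T_s] into blocks of types B1, B2, B3 (no B1* blocks). Define the dual sequence: a B1 block [a,a] maps to [a,a]; a B2 block [a_1, b_1^2, ..., b_k^2, a_2] maps to [a_1 − 1, b_1^2, ..., b_k^2, a_2 + 1]; a B3 block [a, b_1^2, ..., b_k^2] maps to [a − 1, b_1^2, ..., b_k^2]. Then the concatenation of these dual blocks is a special type C partition of 2n, and it equals the Springer dual partition (d_B^−)_C of d_B. -/

import Mathlib

/-- `[b₁, b₁, b₂, b₂, ...]`: each entry of `bs` doubled. -/
def pairList (bs : List ℕ) : List ℕ := bs.flatMap fun b => [b, b]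

/-- Type B1 block: `[a, a]` with `a` odd. -/
def IsB1 (T : List ℕ) : Prop := ∃ a, Odd a ∧ T = [a, a]

/-- Type B1* block: `[b, b]` with `b` even (and positive). -/
def IsB1s (T : List ℕ) : Prop := ∃ b, 0 < b ∧ Even b ∧ T = [b, b]

/-- Type B2 block: `[a₁, b₁², ..., b_k², a₂]` with `a₁, a₂` odd, all `b_j` even,
`a₁ > b₁ ≥ ... ≥ b_k > a₂` and `k ≥ 0`. -/
def IsB2 (T : List ℕ) : Prop :=
  ∃ a₁ a₂ bs, Odd a₁ ∧ Odd a₂ ∧ a₂ < a₁ ∧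
    (∀ b ∈ bs, Even b ∧ a₂ < b ∧ b < a₁) ∧ List.Pairwise (· ≥ ·) bs ∧
    T = a₁ :: (pairList bs ++ [a₂])

/-- Type B3 block: `[a, b₁², ..., b_k²]` with `a` odd, all `b_j` even (positive),
`a > b₁ ≥ ... ≥ b_k`, `k ≥ 0`. -/
def IsB3 (T : List ℕ) : Prop :=
  ∃ a bs, Odd a ∧ (∀ b ∈ bs, 0 < b ∧ Even b ∧ b < a) ∧ List.Pairwise (· ≥ ·) bs ∧
    T = a :: pairList bs

/-- A type B partition of `N`, as a weakly decreasing list of positive integers summing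
to `N` in which every even part occurs with even multiplicity. -/
def IsTypeBList (d : List ℕ) (N : ℕ) : Prop :=
  List.Pairwise (· ≥ ·) d ∧ (∀ x ∈ d, 0 < x) ∧ d.sum = N ∧
    ∀ i, Even i → Even (d.count i)

/-- `Ts` is a decomposition of `d` into consecutive blocks of types B1, B1*, B2, B3. -/
def IsBlockDecomp (d : List ℕ) (Ts : List (List ℕ)) : Prop :=
  d = Ts.flatten ∧ ∀ T ∈ Ts, IsB1 T ∨ IsB1s T ∨ IsB2 T ∨ IsB3 T

/-- The block of type B3 appears exactly once, and at the end. -/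
def B3AtEnd (Ts : List (List ℕ)) : Prop :=
  ∃ Ts' T, Ts = Ts' ++ [T] ∧ IsB3 T ∧ ∀ T' ∈ Ts', ¬ IsB3 T'

/-- The transpose (dual) partition of a list partition. -/
def transposeL (d : List ℕ) : List ℕ :=
  (List.range d.headI).map fun i => d.countP fun x => decide (i + 1 ≤ x)

/-- A type C partition of `N`, as a weakly decreasing list of positive integers summing
to `N` in which every odd part occurs with even multiplicity. -/
def IsTypeCList (d : List ℕ) (N : ℕ) : Prop :=
  List.Pairwise (· ≥ ·) d ∧ (∀ x ∈ d, 0 < x) ∧ d.sum = N ∧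
    ∀ i, Odd i → Even (d.count i)

/-- Dominance order on list partitions: all partial sums of `c` are at most those of `e`. -/
def DomL (e c : List ℕ) : Prop := ∀ k, (c.take k).sum ≤ (e.take k).sum

/-- `(e)_C`: the largest type C partition of `N` dominated by `e`. -/
def IsCCollapseL (e c : List ℕ) (N : ℕ) : Prop :=
  IsTypeCList c N ∧ DomL e c ∧ ∀ c', IsTypeCList c' N → DomL e c' → DomL c c'

/-- `d⁻`: subtract 1 from the smallest part of `d`. -/
def dminusL (d : List ℕ) : List ℕ := d.dropLast ++ [d.getLast! - 1]

/-- The Springer-dual block of a block: B1 `[a,a] ↦ [a,a]`;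
B2 `[a₁, b₁², ..., b_k², a₂] ↦ [a₁-1, b₁², ..., b_k², a₂+1]`;
B3 `[a, b₁², ..., b_k²] ↦ [a-1, b₁², ..., b_k²]` (dropping `a-1` when it is `0`). -/
def IsDualBlock (T T' : List ℕ) : Prop :=
  (∃ a, Odd a ∧ T = [a, a] ∧ T' = [a, a]) ∨
  (∃ a₁ a₂ bs, Odd a₁ ∧ Odd a₂ ∧ a₂ < a₁ ∧
    (∀ b ∈ bs, Even b ∧ a₂ < b ∧ b < a₁) ∧ List.Pairwise (· ≥ ·) bs ∧
    T = a₁ :: (pairList bs ++ [a₂]) ∧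
    T' = (a₁ - 1) :: (pairList bs ++ [a₂ + 1])) ∨
  (∃ a bs, Odd a ∧ (∀ b ∈ bs, 0 < b ∧ Even b ∧ b < a) ∧ List.Pairwise (· ≥ ·) bs ∧
    T = a :: pairList bs ∧
    T' = if a = 1 then [] else (a - 1) :: pairList bs)

/-!
Split `d = D ++ T` into its B1/B2 blocks `D` and the final B3 block `T`, and the dual
`c = C ++ T'` accordingly. All parts of the dual blocks are even except the pairs `[a, a]` of
B1 blocks, so `c` is of type C, and the parts `c[2j], c[2j+1]` have equal parity, which makes the
transpose of type C as well.

The partial sums of `c` equal those of `d`, except inside a B2 block and throughout `T`, where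
those of `d` are odd and `c` is one short. A type C partition `c'` only drops at even partial
sums, so if `c' ≤ d` meets `d` at an odd partial sum it must keep pace with `d` part by part.
This is impossible across the drop to the last part of a B2 block, and impossible up to the odd
total `2n + 1`; hence `c'` is one short wherever `c` is, i.e. `c' ≤ c`. And `c ≤ d⁻`, since
`d⁻` differs from `d` only in its last part, while `c` is one short throughout `T`.
-/

def partialSum (l : List ℕ) (k : ℕ) : ℕ := (l.take k).sum

/-- Position `k` starts a strictly smaller part; never true at `k = 0`, where `k - 1 = 0`. -/
def IsDropAt (l : List ℕ) (k : ℕ) : Prop := l.getD k 0 < l.getD (k - 1) 0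

section PartialSum

variable {l l₁ l₂ : List ℕ} {k : ℕ}

lemma partialSum_succ (l : List ℕ) (k : ℕ) :
    partialSum l (k + 1) = partialSum l k + l.getD k 0 := by
  rw [partialSum, partialSum, List.take_add_one, List.sum_append, List.getD_eq_getElem?_getD]
  cases l[k]? <;> simp

lemma partialSum_cons_succ (x : ℕ) (l : List ℕ) (k : ℕ) :
    partialSum (x :: l) (k + 1) = x + partialSum l k := by
  simp [partialSum]

lemma partialSum_le_sum (l : List ℕ) (k : ℕ) : partialSum l k ≤ l.sum := by
  conv_rhs => rw [← List.take_append_drop k l, List.sum_append]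
  exact Nat.le_add_right _ _

lemma partialSum_of_length_le (h : l.length ≤ k) : partialSum l k = l.sum := by
  rw [partialSum, List.take_of_length_le h]

lemma partialSum_append_of_le_length (h : k ≤ l₁.length) :
    partialSum (l₁ ++ l₂) k = partialSum l₁ k := by
  simp [partialSum, List.take_append, Nat.sub_eq_zero_of_le h]

lemma partialSum_append_of_length_le (h : l₁.length ≤ k) :
    partialSum (l₁ ++ l₂) k = l₁.sum + partialSum l₂ (k - l₁.length) := by
  rw [partialSum, List.take_append, List.sum_append, List.take_of_length_le h, partialSum]

lemma even_partialSum_of_forall_even (h : ∀ x ∈ l, Even x) (k : ℕ) :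
    Even (partialSum l k) := by
  rw [even_iff_two_dvd]
  exact List.dvd_sum fun x hx => (h x (List.mem_of_mem_take hx)).two_dvd

lemma getD_le_getD_of_pairwise (hs : l.Pairwise (· ≥ ·)) {i j : ℕ} (hij : i ≤ j) :
    l.getD j 0 ≤ l.getD i 0 := by
  by_cases hj : j < l.length
  · rw [List.getD_eq_getElem _ _ hj, List.getD_eq_getElem _ _ (by omega)]
    exact hs.rel_get_of_le (a := ⟨i, by omega⟩) (b := ⟨j, hj⟩) hij
  · rw [List.getD_eq_default _ _ (by omega)]
    exact Nat.zero_le _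

end PartialSum

section IsDropAt

variable {l₁ l₂ : List ℕ} {m : ℕ}

lemma IsDropAt.append_right (h : IsDropAt l₁ m) (hm : m < l₁.length) :
    IsDropAt (l₁ ++ l₂) m := by
  unfold IsDropAt at h ⊢
  rwa [List.getD_append _ _ _ _ hm, List.getD_append _ _ _ _ (by omega)]

lemma IsDropAt.append_left (h : IsDropAt l₂ m) : IsDropAt (l₁ ++ l₂) (l₁.length + m) := by
  unfold IsDropAt at h ⊢
  have hm : 1 ≤ m := by
    by_contra h0
    simp [show m = 0 by omega] at h
  rwa [List.getD_append_right _ _ _ _ (by omega), List.getD_append_right _ _ _ _ (by omega),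
    Nat.add_sub_cancel_left, show l₁.length + m - 1 - l₁.length = m - 1 by omega]

lemma isDropAt_length_append_singleton {l : List ℕ} {a : ℕ} (hl : l ≠ [])
    (h : ∀ x ∈ l, a < x) : IsDropAt (l ++ [a]) l.length := by
  have hlen := List.length_pos_iff.mpr hl
  rw [IsDropAt, List.getD_append_right _ _ _ _ le_rfl, Nat.sub_self,
    List.getD_append _ _ _ (l.length - 1) (by omega),
    List.getD_eq_getElem (n := l.length - 1) _ _ (by omega)]
  exact h _ (List.getElem_mem _)

end IsDropAt

section TypeC

variable {l : List ℕ} {k : ℕ}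

lemma even_sum_of_even_count_odd (h : ∀ v, Odd v → Even (l.count v)) : Even l.sum := by
  classical
  rw [Finset.sum_list_count]
  refine Finset.even_sum _ fun v _ => ?_
  rw [smul_eq_mul, Nat.even_mul]
  exact (Nat.even_or_odd v).elim Or.inr fun hv => Or.inl (h v hv)

lemma take_eq_filter_of_isDropAt (hs : l.Pairwise (· ≥ ·)) (hk : IsDropAt l k) :
    l.take k = l.filter (l.getD k 0 < ·) := by
  have hsplit := List.filter_append (p := (l.getD k 0 < ·)) (l.take k) (l.drop k)
  rw [List.take_append_drop] at hsplit
  rw [hsplit, List.filter_eq_self.mpr, List.filter_eq_nil_iff.mpr, List.append_nil]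
  · intro x hx
    obtain ⟨j, hj, rfl⟩ := List.mem_drop_iff_getElem.mp hx
    have := getD_le_getD_of_pairwise hs (Nat.le_add_right k j)
    rw [List.getD_eq_getElem (n := k + j) _ _ (by omega)] at this
    simpa using this
  · intro x hx
    obtain ⟨i, hi, rfl⟩ := List.mem_take_iff_getElem.mp hx
    rw [Nat.lt_min] at hi
    have := getD_le_getD_of_pairwise hs (show i ≤ k - 1 by omega)
    rw [List.getD_eq_getElem (n := i) _ _ hi.2] at this
    unfold IsDropAt at hk
    simp only [decide_eq_true_eq]
    omega

/-- At a drop the prefix consists of the parts exceeding `l[k]`, among which odd parts come in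
pairs. -/
lemma even_partialSum_of_isDropAt (hs : l.Pairwise (· ≥ ·))
    (hcount : ∀ v, Odd v → Even (l.count v)) (hk : IsDropAt l k) :
    Even (partialSum l k) := by
  rw [partialSum, take_eq_filter_of_isDropAt hs hk]
  refine even_sum_of_even_count_odd fun v hv => ?_
  by_cases hp : l.getD k 0 < v
  · rw [List.count_filter (by simpa using hp)]
    exact hcount v hv
  · rw [List.count_eq_zero.mpr fun hmem => hp (by simpa using (List.mem_filter.mp hmem).2)]
    exact ⟨0, rfl⟩

end TypeC

section Dominance

variable {d c : List ℕ} {k : ℕ}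

/-- A type C partition cannot drop at an odd partial sum, so once it meets `d` there its next part
is at least the previous part of `d`. -/
lemma getD_pred_le_of_partialSum_eq_of_odd
    (hdrop : ∀ i, IsDropAt c i → Even (partialSum c i))
    (hdom : ∀ i, partialSum c i ≤ partialSum d i)
    (heq : partialSum c k = partialSum d k) (hodd : Odd (partialSum d k)) :
    d.getD (k - 1) 0 ≤ c.getD k 0 := by
  have hnodrop : ¬ IsDropAt c k := fun h => Nat.not_even_iff_odd.mpr hodd (heq ▸ hdrop k h)
  rcases k with _ | j
  · simp [partialSum] at hodd
  have h1 := partialSum_succ c j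
  have h2 := partialSum_succ d j
  have := hdom j
  unfold IsDropAt at hnodrop
  simp only [add_tsub_cancel_right] at hnodrop ⊢
  omega

lemma partialSum_lt_of_isDropAt
    (hdrop : ∀ i, IsDropAt c i → Even (partialSum c i))
    (hdom : ∀ i, partialSum c i ≤ partialSum d i)
    (hodd : Odd (partialSum d k)) (hk : IsDropAt d k) :
    partialSum c k < partialSum d k := by
  refine lt_of_le_of_ne (hdom k) fun heq => ?_
  have := getD_pred_le_of_partialSum_eq_of_odd hdrop hdom heq hodd
  have := hdom (k + 1)
  rw [partialSum_succ, partialSum_succ] at this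
  unfold IsDropAt at hk
  omega

lemma partialSum_lt_of_partialSum_succ_lt (hd : d.Pairwise (· ≥ ·))
    (hdrop : ∀ i, IsDropAt c i → Even (partialSum c i))
    (hdom : ∀ i, partialSum c i ≤ partialSum d i)
    (hodd : Odd (partialSum d k)) (h : partialSum c (k + 1) < partialSum d (k + 1)) :
    partialSum c k < partialSum d k := by
  refine lt_of_le_of_ne (hdom k) fun heq => ?_
  have := getD_pred_le_of_partialSum_eq_of_odd hdrop hdom heq hodd
  have := getD_le_getD_of_pairwise hd (Nat.sub_le k 1)
  rw [partialSum_succ, partialSum_succ] at h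
  omega

lemma partialSum_lt_of_odd_run (hd : d.Pairwise (· ≥ ·))
    (hdrop : ∀ i, IsDropAt c i → Even (partialSum c i))
    (hdom : ∀ i, partialSum c i ≤ partialSum d i) {m : ℕ} (hkm : k ≤ m)
    (hodd : ∀ j, k ≤ j → j < m → Odd (partialSum d j))
    (hm : partialSum c m < partialSum d m) : partialSum c k < partialSum d k := by
  obtain ⟨i, rfl⟩ := Nat.exists_eq_add_of_le hkm
  induction i generalizing k with
  | zero => exact hm
  | succ i ih =>
    refine partialSum_lt_of_partialSum_succ_lt hd hdrop hdom (hodd k le_rfl (by omega)) ?_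
    exact ih (by omega) (fun j hj hjm => hodd j (by omega) (by omega)) (by rwa [add_right_comm])

end Dominance

section Transpose

variable {c : List ℕ}

lemma le_getD_iff_lt_countP (hs : c.Pairwise (· ≥ ·)) {m : ℕ} (hm : 1 ≤ m) (j : ℕ) :
    m ≤ c.getD j 0 ↔ j < c.countP (m ≤ ·) := by
  induction c generalizing j with
  | nil => simp only [List.getD_nil, List.countP_nil]; omega
  | cons a t ih =>
    by_cases ha : m ≤ a
    · rw [List.countP_cons_of_pos (by simpa using ha)]
      rcases j with _ | j
      · simpa using ha
      · simpa using ih (List.pairwise_cons.mp hs).2 j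
    · have hle : ∀ x ∈ a :: t, x ≤ a := by
        simpa using fun x hx => (List.pairwise_cons.mp hs).1 x hx
      rw [List.countP_eq_zero.mpr fun x hx => by simpa using (hle x hx).trans_lt (not_le.mp ha)]
      have := getD_le_getD_of_pairwise hs (Nat.zero_le j)
      simp only [List.getD_cons_zero] at this
      omega

lemma countP_range_Ico (lo hi h : ℕ) :
    (List.range h).countP (fun i => decide (lo ≤ i) && decide (i + 1 ≤ hi)) = min hi h - lo := by
  induction h with
  | zero => simp
  | succ h ih =>
    rw [List.range_succ, List.countP_append, ih, List.countP_singleton]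
    simp only [Bool.and_eq_true, decide_eq_true_eq]
    split_ifs <;> omega

lemma sum_map_range_indicator (a h : ℕ) :
    ((List.range h).map fun i => if i + 1 ≤ a then 1 else 0).sum = min a h := by
  induction h with
  | zero => simp
  | succ h ih =>
    rw [List.range_succ, List.map_append, List.sum_append, ih, List.map_singleton,
      List.sum_singleton]
    split_ifs <;> omega

lemma sum_map_range_countP (c : List ℕ) {h : ℕ} (hc : ∀ x ∈ c, x ≤ h) :
    ((List.range h).map fun i => c.countP (i + 1 ≤ ·)).sum = c.sum := by
  induction c with
  | nil => simp
  | cons a t ih =>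
    simp only [List.countP_cons, decide_eq_true_eq, List.sum_map_add, List.sum_cons]
    rw [ih fun x hx => hc x (List.mem_cons_of_mem a hx), sum_map_range_indicator,
      min_eq_left (hc a List.mem_cons_self), add_comm]

lemma getD_zero_eq_headI (c : List ℕ) : c.getD 0 0 = c.headI := by
  cases c <;> rfl

lemma le_headI_of_pairwise (hs : c.Pairwise (· ≥ ·)) {x : ℕ} (hx : x ∈ c) : x ≤ c.headI := by
  have := getD_le_getD_of_pairwise hs (Nat.zero_le (c.idxOf x))
  rwa [List.getD_eq_getElem _ _ (List.idxOf_lt_length_of_mem hx), List.getElem_idxOf,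
    getD_zero_eq_headI] at this

lemma transposeL_pairwise (c : List ℕ) : (transposeL c).Pairwise (· ≥ ·) := by
  rw [transposeL, List.pairwise_map]
  refine List.pairwise_lt_range.imp fun hij => List.countP_mono_left fun x _ hx => ?_
  simp only [decide_eq_true_eq] at hx ⊢
  omega

lemma pos_of_mem_transposeL {x : ℕ} (hx : x ∈ transposeL c) : 0 < x := by
  obtain ⟨i, hi, rfl⟩ := List.mem_map.mp hx
  cases c with
  | nil => simp at hi
  | cons a t =>
    rw [List.mem_range, List.headI_cons] at hi
    rw [List.countP_cons_of_pos (by simpa using hi)]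
    exact Nat.succ_pos _

lemma sum_transposeL (hs : c.Pairwise (· ≥ ·)) : (transposeL c).sum = c.sum :=
  sum_map_range_countP c fun _ => le_headI_of_pairwise hs

lemma count_transposeL (hs : c.Pairwise (· ≥ ·)) {v : ℕ} (hv : 1 ≤ v) :
    (transposeL c).count v = c.getD (v - 1) 0 - c.getD v 0 := by
  have hchar : ∀ i, (c.countP (i + 1 ≤ ·) = v ↔ c.getD v 0 ≤ i ∧ i + 1 ≤ c.getD (v - 1) 0) := by
    intro i
    have h1 := le_getD_iff_lt_countP hs (Nat.le_add_left 1 i) (v - 1)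
    have h2 := le_getD_iff_lt_countP hs (Nat.le_add_left 1 i) v
    omega
  rw [transposeL, List.count_eq_countP, List.countP_map]
  rw [List.countP_congr (q := fun i => decide (c.getD v 0 ≤ i) && decide (i + 1 ≤ c.getD (v - 1) 0))
    fun i _ => by simpa using hchar i, countP_range_Ico]
  have := getD_le_getD_of_pairwise hs (Nat.zero_le (v - 1))
  rw [getD_zero_eq_headI] at this
  omega

end Transpose

section PairList

lemma pairList_cons (b : ℕ) (bs : List ℕ) : pairList (b :: bs) = b :: b :: pairList bs := by
  simp [pairList]

lemma mem_pairList {x : ℕ} {bs : List ℕ} : x ∈ pairList bs ↔ x ∈ bs := by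
  simp [pairList]

lemma length_pairList (bs : List ℕ) : (pairList bs).length = 2 * bs.length := by
  induction bs with
  | nil => rfl
  | cons b t ih =>
    rw [pairList_cons, List.length_cons, List.length_cons, ih, List.length_cons]
    ring

lemma sum_pairList (bs : List ℕ) : (pairList bs).sum = 2 * bs.sum := by
  induction bs with
  | nil => rfl
  | cons b t ih =>
    rw [pairList_cons, List.sum_cons, List.sum_cons, ih, List.sum_cons]
    ring

lemma pairwise_pairList {bs : List ℕ} (h : bs.Pairwise (· ≥ ·)) :
    (pairList bs).Pairwise (· ≥ ·) := by
  induction bs with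
  | nil => exact List.Pairwise.nil
  | cons b t ih =>
    have hb : ∀ y ∈ pairList t, b ≥ y := fun y hy =>
      (List.pairwise_cons.mp h).1 y (mem_pairList.mp hy)
    rw [pairList_cons, List.pairwise_cons, List.pairwise_cons]
    exact ⟨by simpa using hb, hb, ih (List.pairwise_cons.mp h).2⟩

end PairList

def SameParityInPairs (l : List ℕ) : Prop :=
  ∀ j, l.getD (2 * j) 0 % 2 = l.getD (2 * j + 1) 0 % 2

section SameParityInPairs

variable {l l₁ l₂ : List ℕ}

lemma sameParityInPairs_of_forall_even (h : ∀ x ∈ l, Even x) : SameParityInPairs l := by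
  have hget : ∀ i, l.getD i 0 % 2 = 0 := fun i => by
    rw [List.getD_eq_getElem?_getD]
    cases hi : l[i]? with
    | none => rfl
    | some x => exact Nat.even_iff.mp (h x (List.mem_of_getElem? hi))
  exact fun j => (hget _).trans (hget _).symm

lemma SameParityInPairs.append (h₁ : SameParityInPairs l₁) (h₂ : SameParityInPairs l₂)
    (hl : Even l₁.length) : SameParityInPairs (l₁ ++ l₂) := by
  intro j
  obtain ⟨m, hm⟩ := hl
  by_cases h : j < m
  · rw [List.getD_append _ _ _ _ (by omega), List.getD_append _ _ _ _ (by omega)]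
    exact h₁ j
  · rw [List.getD_append_right _ _ _ _ (by omega), List.getD_append_right _ _ _ _ (by omega),
      show 2 * j - l₁.length = 2 * (j - m) by omega,
      show 2 * j + 1 - l₁.length = 2 * (j - m) + 1 by omega]
    exact h₂ _

/-- The multiplicity of `2j+1` in the transpose is `c[2j] - c[2j+1]`. -/
lemma isTypeCList_transposeL {c : List ℕ} {N : ℕ} (hc : IsTypeCList c N)
    (hp : SameParityInPairs c) : IsTypeCList (transposeL c) N := by
  obtain ⟨hs, -, hsum, -⟩ := hc
  refine ⟨transposeL_pairwise c, fun _ => pos_of_mem_transposeL, hsum ▸ sum_transposeL hs, ?_⟩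
  rintro _ ⟨j, rfl⟩
  rw [count_transposeL hs (by omega), Nat.add_sub_cancel, Nat.even_iff]
  have := hp j
  have := getD_le_getD_of_pairwise hs (Nat.le_succ (2 * j))
  omega

end SameParityInPairs

def HasOddRunToDrop (D : List ℕ) (k : ℕ) : Prop :=
  ∃ m, k ≤ m ∧ m < D.length ∧ (∀ j, k ≤ j → j ≤ m → Odd (partialSum D j)) ∧ IsDropAt D m

section HasOddRunToDrop

variable {D₁ D₂ : List ℕ} {k : ℕ}

lemma HasOddRunToDrop.append_right (h : HasOddRunToDrop D₁ k) :
    HasOddRunToDrop (D₁ ++ D₂) k := by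
  obtain ⟨m, hkm, hm, hodd, hdrop⟩ := h
  refine ⟨m, hkm, by rw [List.length_append]; omega, fun j hkj hjm => ?_, hdrop.append_right hm⟩
  rw [partialSum_append_of_le_length (by omega)]
  exact hodd j hkj hjm

lemma HasOddRunToDrop.append_left (hD₁ : Even D₁.sum) (h : HasOddRunToDrop D₂ k) :
    HasOddRunToDrop (D₁ ++ D₂) (D₁.length + k) := by
  obtain ⟨m, hkm, hm, hodd, hdrop⟩ := h
  refine ⟨D₁.length + m, by omega, by rw [List.length_append]; omega, fun j hkj hjm => ?_,
    hdrop.append_left⟩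
  rw [partialSum_append_of_length_le (by omega)]
  exact hD₁.add_odd (hodd _ (by omega) (by omega))

lemma partialSum_lt_of_hasOddRunToDrop {d c : List ℕ} (hd : d.Pairwise (· ≥ ·))
    (hdrop : ∀ i, IsDropAt c i → Even (partialSum c i))
    (hdom : ∀ i, partialSum c i ≤ partialSum d i) (h : HasOddRunToDrop d k) :
    partialSum c k < partialSum d k := by
  obtain ⟨m, hkm, -, hodd, hdropm⟩ := h
  exact partialSum_lt_of_odd_run hd hdrop hdom hkm (fun j hkj hjm => hodd j hkj hjm.le)
    (partialSum_lt_of_isDropAt hdrop hdom (hodd m hkm le_rfl) hdropm)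

end HasOddRunToDrop

lemma pairwise_append_of_bounded {D₁ D₂ C₁ C₂ : List ℕ} (h₁ : C₁.Pairwise (· ≥ ·))
    (h₂ : C₂.Pairwise (· ≥ ·)) (hC₁ : ∀ x ∈ C₁, ∃ y ∈ D₁, y ≤ x)
    (hC₂ : ∀ x ∈ C₂, ∃ y ∈ D₂, x ≤ y) (hglue : ∀ x ∈ D₁, ∀ y ∈ D₂, y ≤ x) :
    (C₁ ++ C₂).Pairwise (· ≥ ·) := by
  refine List.pairwise_append.mpr ⟨h₁, h₂, fun x hx y hy => ?_⟩
  obtain ⟨x', hx', hxx'⟩ := hC₁ x hx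
  obtain ⟨y', hy', hyy'⟩ := hC₂ y hy
  exact (hyy'.trans (hglue x' hx' y' hy')).trans hxx'

/-- The properties of the dual `C` of a concatenation `D` of B1 and B2 blocks that survive
concatenation. -/
structure IsBlockDual (D C : List ℕ) : Prop where
  length_eq : C.length = D.length
  sum_eq : C.sum = D.sum
  even_sum : Even D.sum
  even_length : Even D.length
  even_count : ∀ v, Odd v → Even (C.count v)
  sameParityInPairs : SameParityInPairs C
  pairwise : C.Pairwise (· ≥ ·)
  pos : ∀ x ∈ C, 0 < x
  exists_ge : ∀ x ∈ C, ∃ y ∈ D, x ≤ y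
  exists_le : ∀ x ∈ C, ∃ y ∈ D, y ≤ x
  partialSum_eq_or : ∀ k, partialSum C k = partialSum D k ∨
    (partialSum C k + 1 = partialSum D k ∧ HasOddRunToDrop D k)

namespace IsBlockDual

lemma nil : IsBlockDual [] [] where
  length_eq := rfl
  sum_eq := rfl
  even_sum := ⟨0, rfl⟩
  even_length := ⟨0, rfl⟩
  even_count _ _ := ⟨0, rfl⟩
  sameParityInPairs _ := rfl
  pairwise := List.Pairwise.nil
  pos := by simp
  exists_ge := by simp
  exists_le := by simp
  partialSum_eq_or _ := Or.inl rfl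

lemma b1 {a : ℕ} (ha : Odd a) : IsBlockDual [a, a] [a, a] where
  length_eq := rfl
  sum_eq := rfl
  even_sum := ⟨a, by simp⟩
  even_length := ⟨1, rfl⟩
  even_count v _ := by by_cases h : v = a <;> simp [List.count_cons, h]
  sameParityInPairs
    | 0 => rfl
    | j + 1 => by
      rw [List.getD_eq_default _ _ (by simp only [List.length_cons, List.length_nil]; omega),
        List.getD_eq_default _ _ (by simp only [List.length_cons, List.length_nil]; omega)]
  pairwise := by simp
  pos := by simpa using ha.pos
  exists_ge x hx := ⟨x, hx, le_rfl⟩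
  exists_le x hx := ⟨x, hx, le_rfl⟩
  partialSum_eq_or _ := Or.inl rfl

lemma partialSum_eq_or_b2 {a₁ a₂ : ℕ} {pl : List ℕ} (h₁ : Odd a₁) (h₁₂ : a₂ < a₁)
    (hpl : ∀ x ∈ pl, Even x ∧ a₂ < x) (k : ℕ) :
    partialSum ((a₁ - 1) :: (pl ++ [a₂ + 1])) k = partialSum (a₁ :: (pl ++ [a₂])) k ∨
      (partialSum ((a₁ - 1) :: (pl ++ [a₂ + 1])) k + 1 = partialSum (a₁ :: (pl ++ [a₂])) k ∧
        HasOddRunToDrop (a₁ :: (pl ++ [a₂])) k) := by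
  have ha₁ := h₁.pos
  rcases k with _ | k
  · exact Or.inl rfl
  by_cases hk : k ≤ pl.length
  · right
    rw [partialSum_cons_succ, partialSum_cons_succ, partialSum_append_of_le_length hk,
      partialSum_append_of_le_length hk]
    refine ⟨by omega, pl.length + 1, by omega, by simp, fun j hj _ => ?_, ?_⟩
    · obtain ⟨j, rfl⟩ := Nat.exists_eq_add_of_le' (show 1 ≤ j by omega)
      rw [partialSum_cons_succ, partialSum_append_of_le_length (by omega)]
      exact h₁.add_even (even_partialSum_of_forall_even (fun x hx => (hpl x hx).1) j)
    · rw [← List.cons_append]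
      exact isDropAt_length_append_singleton (List.cons_ne_nil _ _)
        (List.forall_mem_cons.mpr ⟨h₁₂, fun x hx => (hpl x hx).2⟩)
  · left
    have hlen : ∀ x y : ℕ, (x :: (pl ++ [y])).length = pl.length + 2 := fun _ _ => by simp
    rw [partialSum_of_length_le (by rw [hlen]; omega),
      partialSum_of_length_le (by rw [hlen]; omega)]
    simp only [List.sum_cons, List.sum_append, List.sum_nil]
    omega

lemma b2 {a₁ a₂ : ℕ} {bs : List ℕ} (h₁ : Odd a₁) (h₂ : Odd a₂) (h₁₂ : a₂ < a₁)
    (hb : ∀ b ∈ bs, Even b ∧ a₂ < b ∧ b < a₁) (hbs : bs.Pairwise (· ≥ ·)) :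
    IsBlockDual (a₁ :: (pairList bs ++ [a₂])) ((a₁ - 1) :: (pairList bs ++ [a₂ + 1])) := by
  set pl := pairList bs
  have hpl : ∀ x ∈ pl, Even x ∧ a₂ < x ∧ x < a₁ := fun x hx => hb x (mem_pairList.mp hx)
  have hsum : pl.sum = 2 * bs.sum := sum_pairList bs
  have hodd₁ := Nat.odd_iff.mp h₁
  have hodd₂ := Nat.odd_iff.mp h₂
  have hC : ∀ x ∈ (a₁ - 1) :: (pl ++ [a₂ + 1]), Even x ∧ a₂ < x ∧ x < a₁ := by
    intro x hx
    rcases List.mem_cons.mp hx with rfl | hx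
    · exact ⟨Nat.even_iff.mpr (by omega), by omega, by omega⟩
    rcases List.mem_append.mp hx with hx | hx
    · exact hpl x hx
    · rw [List.mem_singleton.mp hx]
      exact ⟨Nat.even_iff.mpr (by omega), by omega, by omega⟩
  have hpairwise : ((a₁ - 1) :: (pl ++ [a₂ + 1])).Pairwise (· ≥ ·) := by
    refine List.pairwise_cons.mpr ⟨fun y hy => ?_, List.pairwise_append.mpr
      ⟨pairwise_pairList hbs, List.pairwise_singleton _ _, fun x hx y hy => ?_⟩⟩
    · have := (hC y (List.mem_cons_of_mem _ hy)).2.2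
      omega
    · have := (hpl x hx).2.1
      rw [List.mem_singleton.mp hy]
      omega
  exact
    { length_eq := by simp
      sum_eq := by simp only [List.sum_cons, List.sum_append, List.sum_nil]; omega
      even_sum := by
        simp only [List.sum_cons, List.sum_append, List.sum_nil, hsum, Nat.even_iff]
        omega
      even_length := by simp [pl, length_pairList, Nat.even_iff]
      even_count := fun v hv => by
        rw [List.count_eq_zero.mpr fun hv' => Nat.not_even_iff_odd.mpr hv (hC v hv').1]
        exact ⟨0, rfl⟩
      sameParityInPairs := sameParityInPairs_of_forall_even fun x hx => (hC x hx).1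
      pairwise := hpairwise
      pos := fun x hx => by have := (hC x hx).2.1; omega
      exists_ge := fun x hx => ⟨a₁, List.mem_cons_self, (hC x hx).2.2.le⟩
      exists_le := fun x hx => ⟨a₂, by simp, (hC x hx).2.1.le⟩
      partialSum_eq_or :=
        partialSum_eq_or_b2 h₁ h₁₂ fun x hx => ⟨(hpl x hx).1, (hpl x hx).2.1⟩ }

variable {D₁ C₁ D₂ C₂ : List ℕ}

lemma append (h₁ : IsBlockDual D₁ C₁) (h₂ : IsBlockDual D₂ C₂)
    (hglue : ∀ x ∈ D₁, ∀ y ∈ D₂, y ≤ x) : IsBlockDual (D₁ ++ D₂) (C₁ ++ C₂) where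
  length_eq := by simp [h₁.length_eq, h₂.length_eq]
  sum_eq := by simp [h₁.sum_eq, h₂.sum_eq]
  even_sum := by rw [List.sum_append]; exact h₁.even_sum.add h₂.even_sum
  even_length := by rw [List.length_append]; exact h₁.even_length.add h₂.even_length
  even_count v hv := by
    rw [List.count_append]
    exact (h₁.even_count v hv).add (h₂.even_count v hv)
  sameParityInPairs :=
    h₁.sameParityInPairs.append h₂.sameParityInPairs (h₁.length_eq ▸ h₁.even_length)
  pairwise := pairwise_append_of_bounded h₁.pairwise h₂.pairwise h₁.exists_le h₂.exists_ge hglue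
  pos x hx := (List.mem_append.mp hx).elim (h₁.pos x) (h₂.pos x)
  exists_ge x hx := (List.mem_append.mp hx).elim
    (fun h => (h₁.exists_ge x h).imp fun _ hy => ⟨List.mem_append_left _ hy.1, hy.2⟩)
    (fun h => (h₂.exists_ge x h).imp fun _ hy => ⟨List.mem_append_right _ hy.1, hy.2⟩)
  exists_le x hx := (List.mem_append.mp hx).elim
    (fun h => (h₁.exists_le x h).imp fun _ hy => ⟨List.mem_append_left _ hy.1, hy.2⟩)
    (fun h => (h₂.exists_le x h).imp fun _ hy => ⟨List.mem_append_right _ hy.1, hy.2⟩)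
  partialSum_eq_or k := by
    by_cases hk : k ≤ D₁.length
    · rw [partialSum_append_of_le_length hk,
        partialSum_append_of_le_length (h₁.length_eq ▸ hk)]
      exact (h₁.partialSum_eq_or k).imp_right fun h => ⟨h.1, h.2.append_right⟩
    · obtain ⟨k, rfl⟩ := Nat.exists_eq_add_of_le (not_le.mp hk).le
      rw [partialSum_append_of_length_le (Nat.le_add_right _ _),
        partialSum_append_of_length_le (h₁.length_eq ▸ Nat.le_add_right _ _), h₁.length_eq,
        Nat.add_sub_cancel_left, h₁.sum_eq]
      rcases h₂.partialSum_eq_or k with h | ⟨h, hrun⟩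
      · exact Or.inl (by rw [h])
      · exact Or.inr ⟨by omega, hrun.append_left h₁.even_sum⟩

end IsBlockDual

lemma isBlockDual_flatten {Ts Ts' : List (List ℕ)} (h : List.Forall₂ IsDualBlock Ts Ts')
    (hnot : ∀ T ∈ Ts, ¬ IsB3 T) (hs : Ts.flatten.Pairwise (· ≥ ·)) :
    IsBlockDual Ts.flatten Ts'.flatten := by
  induction h with
  | nil => exact IsBlockDual.nil
  | @cons T T' Ts Ts' hTT _ ih =>
    rw [List.flatten_cons, List.pairwise_append] at hs
    rw [List.flatten_cons, List.flatten_cons]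
    refine IsBlockDual.append ?_ (ih (fun T hT => hnot T (List.mem_cons_of_mem _ hT)) hs.2.1)
      fun x hx y hy => hs.2.2 x hx y hy
    rcases hTT with ⟨a, ha, rfl, rfl⟩ | ⟨a₁, a₂, bs, h₁, h₂, h₁₂, hb, hbs, rfl, rfl⟩ |
      ⟨a, bs, ha, hb, hbs, rfl, -⟩
    · exact IsBlockDual.b1 ha
    · exact IsBlockDual.b2 h₁ h₂ h₁₂ hb hbs
    · exact absurd ⟨a, bs, ha, hb, hbs, rfl⟩ (hnot _ List.mem_cons_self)

/-- The properties of the dual `T'` of a B3 block `T`. -/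
structure IsLastBlockDual (T T' : List ℕ) : Prop where
  even : ∀ x ∈ T', Even x
  pos : ∀ x ∈ T', 0 < x
  pairwise : T'.Pairwise (· ≥ ·)
  exists_ge : ∀ x ∈ T', ∃ y ∈ T, x ≤ y
  length_le : T'.length ≤ T.length
  partialSum_add_one : ∀ k, 1 ≤ k → partialSum T' k + 1 = partialSum T k
  odd_partialSum : ∀ k, 1 ≤ k → Odd (partialSum T k)

namespace IsLastBlockDual

variable {T T' : List ℕ}

lemma length_pos (h : IsLastBlockDual T T') : 0 < T.length := by
  by_contra h0
  have := h.odd_partialSum 1 le_rfl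
  rw [List.eq_nil_of_length_eq_zero (by omega : T.length = 0)] at this
  simp [partialSum] at this

lemma sum_add_one (h : IsLastBlockDual T T') : T'.sum + 1 = T.sum := by
  have := h.partialSum_add_one (T.length + 1) (by omega)
  rwa [partialSum_of_length_le (by have := h.length_le; omega),
    partialSum_of_length_le (by omega)] at this

lemma b3 {a : ℕ} {bs : List ℕ} (ha : Odd a) (hb : ∀ b ∈ bs, 0 < b ∧ Even b ∧ b < a)
    (hbs : bs.Pairwise (· ≥ ·)) :
    IsLastBlockDual (a :: pairList bs) (if a = 1 then [] else (a - 1) :: pairList bs) := by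
  have hpl : ∀ x ∈ pairList bs, 0 < x ∧ Even x ∧ x < a := fun x hx => hb x (mem_pairList.mp hx)
  have hodd := Nat.odd_iff.mp ha
  have hrun : ∀ k, 1 ≤ k → Odd (partialSum (a :: pairList bs) k) := fun k hk => by
    obtain ⟨k, rfl⟩ := Nat.exists_eq_add_of_le' hk
    rw [partialSum_cons_succ]
    exact ha.add_even (even_partialSum_of_forall_even (fun x hx => (hpl x hx).2.1) k)
  split_ifs with h1
  · subst h1
    obtain rfl : bs = [] :=
      List.eq_nil_iff_forall_not_mem.mpr fun b hb' => by have := hb b hb'; omega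
    refine ⟨by simp, by simp, List.Pairwise.nil, by simp, by simp, fun k hk => ?_, hrun⟩
    obtain ⟨k, rfl⟩ := Nat.exists_eq_add_of_le' hk
    simp [partialSum, pairList]
  · have hC : ∀ x ∈ (a - 1) :: pairList bs, 0 < x ∧ Even x ∧ x < a := by
      intro x hx
      rcases List.mem_cons.mp hx with rfl | hx
      · exact ⟨by omega, Nat.even_iff.mpr (by omega), by omega⟩
      · exact hpl x hx
    refine ⟨fun x hx => (hC x hx).2.1, fun x hx => (hC x hx).1,
      List.pairwise_cons.mpr ⟨fun y hy => ?_, pairwise_pairList hbs⟩,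
      fun x hx => ⟨a, List.mem_cons_self, (hC x hx).2.2.le⟩, by simp, fun k hk => ?_, hrun⟩
    · obtain ⟨-, hev, hlt⟩ := hpl y hy
      have := Nat.even_iff.mp hev
      omega
    · obtain ⟨k, rfl⟩ := Nat.exists_eq_add_of_le' hk
      rw [partialSum_cons_succ, partialSum_cons_succ]
      omega

end IsLastBlockDual

lemma isLastBlockDual_of_isB3 {T T' : List ℕ} (h3 : IsB3 T) (hdual : IsDualBlock T T') :
    IsLastBlockDual T T' := by
  have hlen : Odd T.length := by
    obtain ⟨a, bs, -, -, -, rfl⟩ := h3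
    simp [length_pairList]
  rcases hdual with ⟨a, -, rfl, -⟩ | ⟨a₁, a₂, bs, -, -, -, -, -, rfl, -⟩ |
    ⟨a, bs, ha, hb, hbs, rfl, rfl⟩
  · exact absurd (Nat.odd_iff.mp hlen) (by simp)
  · simp only [List.length_cons, List.length_append, length_pairList, List.length_nil,
      Nat.odd_iff] at hlen
    omega
  · exact IsLastBlockDual.b3 ha hb hbs

section DMinus

variable {d : List ℕ} {k : ℕ}

lemma partialSum_dminusL_of_lt (hk : k < d.length) : partialSum (dminusL d) k = partialSum d k := by
  rw [dminusL, partialSum_append_of_le_length (by rw [List.length_dropLast]; omega), partialSum,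
    partialSum, List.dropLast_eq_take, List.take_take, min_eq_left (by omega)]

lemma partialSum_dminusL_le_and_le_add_one (d : List ℕ) (k : ℕ) :
    partialSum (dminusL d) k ≤ partialSum d k ∧ partialSum d k ≤ partialSum (dminusL d) k + 1 := by
  by_cases hk : k < d.length
  · rw [partialSum_dminusL_of_lt hk]
    omega
  rcases eq_or_ne d [] with rfl | hd
  · cases k <;> simp [dminusL, partialSum]
  have hlen : (dminusL d).length = d.length := by
    rw [dminusL, List.length_append, List.length_dropLast, List.length_singleton]
    have := List.length_pos_iff.mpr hd
    omega
  have hsplit : d.sum = d.dropLast.sum + d.getLast hd := by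
    conv_lhs => rw [← List.dropLast_append_getLast hd]
    rw [List.sum_append, List.sum_singleton]
  rw [partialSum_of_length_le (by omega), partialSum_of_length_le (by omega), dminusL,
    List.sum_append, List.sum_singleton,
    List.getLast!_of_getLast? (List.getLast?_eq_some_getLast hd), hsplit]
  omega

end DMinus

lemma List.Forall₂.exists_of_append_singleton {α β : Type*} {R : α → β → Prop} {l : List α}
    {a : α} {l' : List β} (h : List.Forall₂ R (l ++ [a]) l') :
    ∃ u b, l' = u ++ [b] ∧ List.Forall₂ R l u ∧ R a b := by
  rw [← List.forall₂_reverse_iff, List.reverse_append, List.reverse_singleton,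
    List.singleton_append, List.forall₂_cons_left_iff] at h
  obtain ⟨b, u, hab, hu, hl'⟩ := h
  refine ⟨u.reverse, b, ?_, ?_, hab⟩
  · rw [← List.reverse_reverse l', hl', List.reverse_cons]
  · rwa [← List.forall₂_reverse_iff, List.reverse_reverse]

section SpringerDual

variable {D C T T' : List ℕ}

lemma partialSum_append_eq_or (hDC : IsBlockDual D C) (hT : IsLastBlockDual T T') (k : ℕ) :
    (partialSum (C ++ T') k = partialSum (D ++ T) k ∧ k ≤ D.length) ∨
      (partialSum (C ++ T') k + 1 = partialSum (D ++ T) k ∧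
        (HasOddRunToDrop (D ++ T) k ∨ D.length < k)) := by
  by_cases hk : k ≤ D.length
  · rw [partialSum_append_of_le_length hk, partialSum_append_of_le_length (hDC.length_eq ▸ hk)]
    rcases hDC.partialSum_eq_or k with h | ⟨h, hrun⟩
    · exact Or.inl ⟨h, hk⟩
    · exact Or.inr ⟨h, Or.inl hrun.append_right⟩
  · refine Or.inr ⟨?_, Or.inr (not_le.mp hk)⟩
    rw [partialSum_append_of_length_le (l₁ := D) (by omega),
      partialSum_append_of_length_le (l₁ := C) (by rw [hDC.length_eq]; omega), hDC.length_eq,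
      hDC.sum_eq, ← hT.partialSum_add_one _ (by omega)]
    omega

lemma odd_partialSum_append (hD : Even D.sum) (hT : IsLastBlockDual T T') {j : ℕ}
    (hj : D.length < j) : Odd (partialSum (D ++ T) j) := by
  rw [partialSum_append_of_length_le hj.le]
  exact hD.add_odd (hT.odd_partialSum _ (by omega))

lemma isTypeCList_append (hDC : IsBlockDual D C) (hT : IsLastBlockDual T T')
    (hs : (D ++ T).Pairwise (· ≥ ·)) {N : ℕ} (hsum : (D ++ T).sum = N + 1) :
    IsTypeCList (C ++ T') N := by
  refine ⟨pairwise_append_of_bounded hDC.pairwise hT.pairwise hDC.exists_le hT.exists_ge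
    (List.pairwise_append.mp hs).2.2, fun x hx => (List.mem_append.mp hx).elim (hDC.pos x)
    (hT.pos x), ?_, fun v hv => ?_⟩
  · rw [List.sum_append] at hsum ⊢
    have := hT.sum_add_one
    rw [hDC.sum_eq]
    omega
  · rw [List.count_append,
      List.count_eq_zero.mpr fun hv' => Nat.not_even_iff_odd.mpr hv (hT.even v hv'), add_zero]
    exact hDC.even_count v hv

lemma domL_dminusL_append (hDC : IsBlockDual D C) (hT : IsLastBlockDual T T') :
    DomL (dminusL (D ++ T)) (C ++ T') := by
  intro k
  change partialSum _ k ≤ partialSum _ k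
  rcases partialSum_append_eq_or hDC hT k with ⟨h, hk⟩ | ⟨h, -⟩
  · rw [h, partialSum_dminusL_of_lt (by rw [List.length_append]; have := hT.length_pos; omega)]
  · have := (partialSum_dminusL_le_and_le_add_one (D ++ T) k).2
    omega

/-- Above the B1/B2 part the partial sums of `D ++ T` stay odd up to the total `N + 1`, which a
type C partition of `N` cannot reach. -/
lemma partialSum_le_append_of_isTypeCList (hDC : IsBlockDual D C) (hT : IsLastBlockDual T T')
    (hs : (D ++ T).Pairwise (· ≥ ·)) {N : ℕ} (hsum : (D ++ T).sum = N + 1) {c : List ℕ}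
    (hc : IsTypeCList c N) (hdom : ∀ i, partialSum c i ≤ partialSum (D ++ T) i) (k : ℕ) :
    partialSum c k ≤ partialSum (C ++ T') k := by
  have hdrop : ∀ i, IsDropAt c i → Even (partialSum c i) :=
    fun _ => even_partialSum_of_isDropAt hc.1 hc.2.2.2
  rcases partialSum_append_eq_or hDC hT k with ⟨h, -⟩ | ⟨h, hrun | hk⟩
  · exact h ▸ hdom k
  · have := partialSum_lt_of_hasOddRunToDrop hs hdrop hdom hrun
    omega
  · have hM : partialSum c (max k (D ++ T).length) <
        partialSum (D ++ T) (max k (D ++ T).length) := by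
      rw [partialSum_of_length_le (le_max_right _ _), hsum, ← hc.2.2.1]
      exact Nat.lt_succ_of_le (partialSum_le_sum c _)
    have := partialSum_lt_of_odd_run hs hdrop hdom (le_max_left _ _)
      (fun j hkj _ => odd_partialSum_append hDC.even_sum hT (by omega)) hM
    omega

end SpringerDual

theorem stmt10_general (n : ℕ) (d : List ℕ) (hd : IsTypeBList d (2 * n + 1))
    (Ts Ts' : List (List ℕ))
    (hTs : IsBlockDecomp d Ts ∧ B3AtEnd Ts)
    (hdual : List.Forall₂ IsDualBlock Ts Ts') :
    IsTypeCList Ts'.flatten (2 * n) ∧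
    IsTypeCList (transposeL Ts'.flatten) (2 * n) ∧
    IsCCollapseL (dminusL d) Ts'.flatten (2 * n) := by
  obtain ⟨⟨rfl, -⟩, Ts₀, T, rfl, hT3, hnot⟩ := hTs
  obtain ⟨hs, -, hsum, -⟩ := hd
  obtain ⟨Ts₀', T', rfl, hdual₀, hdualT⟩ := hdual.exists_of_append_singleton
  simp only [List.flatten_append, List.flatten_cons, List.flatten_nil, List.append_nil] at hs hsum ⊢
  have hDC := isBlockDual_flatten hdual₀ hnot (List.pairwise_append.mp hs).1
  have hT := isLastBlockDual_of_isB3 hT3 hdualT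
  have hC := isTypeCList_append hDC hT hs hsum
  have hpairs : SameParityInPairs (Ts₀'.flatten ++ T') :=
    hDC.sameParityInPairs.append (sameParityInPairs_of_forall_even hT.even)
      (hDC.length_eq ▸ hDC.even_length)
  refine ⟨hC, isTypeCList_transposeL hC hpairs, hC, domL_dminusL_append hDC hT,
    fun c hc hdom k => ?_⟩
  exact partialSum_le_append_of_isTypeCList hDC hT hs hsum hc
    (fun j => (hdom j).trans (partialSum_dminusL_le_and_le_add_one _ j).1) k

/-- for a special type B partition `d` of `2n+1` with block decomposition
`Ts`, the concatenation of the dual blocks is a special type C partition of `2n`, and it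
equals the Springer dual partition `(d⁻)_C` of `d`. -/
theorem stmt10 (n : ℕ) (d : List ℕ) (hd : IsTypeBList d (2 * n + 1))
    (hspec : IsTypeBList (transposeL d) (2 * n + 1))
    (Ts Ts' : List (List ℕ))
    (hTs : IsBlockDecomp d Ts ∧ B3AtEnd Ts)
    (hdual : List.Forall₂ IsDualBlock Ts Ts') :
    IsTypeCList Ts'.flatten (2 * n) ∧
    IsTypeCList (transposeL Ts'.flatten) (2 * n) ∧
    IsCCollapseL (dminusL d) Ts'.flatten (2 * n) :=
  stmt10_general n d hd Ts Ts' hTs hdual
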